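/- Let v_1,...,v_k ∈ ℤ^n and let 𝒵 = { z ∈ ℕ^k : z_1 v_1 + z_2 v_2 + ··· + z_k v_k = 0 in ℤ^n }. Then the generating function f_𝒵(y_1,...,y_k) = Σ_{z ∈ 𝒵} y_1^{z_1} y_2^{z_2} ··· y_k^{z_k} is an ℕ-rational power series. -/

import Mathlib

/-!
By Gordan's lemma the monoid `𝒵` is generated by finitely many nonzero vectors `g_1, …, g_m`, so
it is the image of `φ : ℕ^m → ℕ^k`, `e ↦ ∑ e_j g_j`. Let `S ⊆ ℕ^m` consist of the
lexicographically least element of each fibre of `φ`; since the lexicographic order is compatible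
with addition, `S` is a lower set, and `f_𝒵` is obtained from the indicator series of `S` by the
substitution `x_j ↦ y^{g_j}`. Since `φ` does not lower total degree, its fibres are finite and its
kernel is trivial, so this substitution is a semiring map preserving constant terms, and it
preserves ℕ-rationality.

Indicator series of lower sets of `ℕ^m` are ℕ-rational by well-founded induction, lower sets
satisfying the descending chain condition because `ℕ^m` is well-quasi-ordered: for a nonzero
`x ∈ S`, `1_S = 1_{S \ (x + ℕ^m)} + y^x 1_{S - x}`, and when `S - x = S` this equation is
solved by `1_{S \ (x + ℕ^m)} / (1 - y^x)`.
-/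

/-- The class of ℕ-rational multivariate power series: the smallest class of power series in
`ℕ[[x]]` containing the polynomials and closed under addition, multiplication and
quasi-inverse `h ↦ 1/(1-h)` (for `h` with zero constant term, `g = 1/(1-h)` is the unique
series with `g = 1 + h * g`). -/
inductive MvPowerSeries.IsNRational {σ : Type} : MvPowerSeries σ ℕ → Prop
  | poly (P : MvPolynomial σ ℕ) : MvPowerSeries.IsNRational (P : MvPowerSeries σ ℕ)
  | add {f g : MvPowerSeries σ ℕ} : MvPowerSeries.IsNRational f →
      MvPowerSeries.IsNRational g → MvPowerSeries.IsNRational (f + g)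
  | mul {f g : MvPowerSeries σ ℕ} : MvPowerSeries.IsNRational f →
      MvPowerSeries.IsNRational g → MvPowerSeries.IsNRational (f * g)
  | quasiInv {h g : MvPowerSeries σ ℕ} : MvPowerSeries.IsNRational h →
      MvPowerSeries.constantCoeff h = 0 → g = 1 + h * g →
      MvPowerSeries.IsNRational g

instance LowerSet.wellFoundedLT {α : Type*} [Preorder α] [WellQuasiOrderedLE α] :
    WellFoundedLT (LowerSet α) := by
  rw [WellFoundedLT, isWellFounded_iff, RelEmbedding.wellFounded_iff_isEmpty]
  refine ⟨fun f ↦ ?_⟩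
  have hanti : Antitone f := fun m n h ↦ by
    rcases h.eq_or_lt with rfl | h
    · exact le_rfl
    · exact (f.map_rel_iff.2 h).le
  choose x hx hx' using fun n : ℕ ↦
    Set.exists_of_ssubset (LowerSet.coe_ssubset_coe.2 (f.map_rel_iff.2 n.lt_succ_self))
  obtain ⟨a, b, hab, hle⟩ := wellQuasiOrdered_le x
  exact hx' a ((f (a + 1)).lower hle (hanti hab (hx b)))

theorem Finsupp.degree_le_degree_linearCombination {ι σ : Type*} {g : ι → σ →₀ ℕ}
    (hg : ∀ j, g j ≠ 0) (e : ι →₀ ℕ) : e.degree ≤ (linearCombination ℕ g e).degree := by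
  rw [linearCombination_apply, map_finsuppSum, degree_apply, Finsupp.sum]
  refine Finset.sum_le_sum fun j _ ↦ ?_
  rw [map_nsmul, smul_eq_mul]
  exact Nat.le_mul_of_pos_right _ (pos_iff_ne_zero.2 ((degree_eq_zero_iff _).not.2 (hg j)))

namespace MvPowerSeries

variable {σ τ : Type}

open Classical in
noncomputable def indicator (S : Set (σ →₀ ℕ)) : MvPowerSeries σ ℕ :=
  fun d ↦ if d ∈ S then 1 else 0

theorem coeff_indicator (S : Set (σ →₀ ℕ)) (d : σ →₀ ℕ) [Decidable (d ∈ S)] :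
    coeff d (indicator S) = if d ∈ S then 1 else 0 := by
  rw [coeff_apply, indicator]
  congr

theorem indicator_singleton_zero : indicator ({0} : Set (σ →₀ ℕ)) = 1 := by
  classical
  ext d
  simp [coeff_indicator, coeff_one]

theorem indicator_eq_add_monomial_mul (S : Set (σ →₀ ℕ)) (x : σ →₀ ℕ) :
    indicator S = indicator {e ∈ S | ¬ x ≤ e} + monomial x 1 * indicator {e | e + x ∈ S} := by
  classical
  ext d
  simp only [map_add, coeff_monomial_mul, coeff_indicator, Set.mem_ofPred_eq, one_mul]
  by_cases hx : x ≤ d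
  · simp [hx, tsub_add_cancel_of_le hx]
  · simp [hx]

theorem eq_of_eq_add_mul {R : Type*} [Semiring R] {A h F G : MvPowerSeries σ R}
    (hh : constantCoeff h = 0) (hF : F = A + h * F) (hG : G = A + h * G) : F = G := by
  classical
  ext d
  induction d using WellFoundedLT.induction with
  | _ d ih =>
  rw [hF, hG, map_add, map_add, coeff_mul, coeff_mul]
  congr 1
  refine Finset.sum_congr rfl fun p hp ↦ ?_
  rw [Finset.HasAntidiagonal.mem_antidiagonal] at hp
  rcases eq_or_ne p.1 0 with h0 | h0
  · rw [h0, coeff_zero_eq_constantCoeff_apply, hh, zero_mul, zero_mul]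
  · rw [ih p.2 (hp ▸ lt_add_of_pos_left _ (pos_iff_ne_zero.2 h0))]

theorem isNRational_monomial (x : σ →₀ ℕ) (a : ℕ) : IsNRational (monomial x a) := by
  rw [← MvPolynomial.coe_monomial]
  exact .poly _

theorem isNRational_of_finite_support (f : MvPowerSeries σ ℕ)
    (hf : {d | coeff d f ≠ 0}.Finite) : IsNRational f := by
  convert IsNRational.poly (AddMonoidAlgebra.ofCoeff (Finsupp.ofSupportFinite f hf))
  ext d
  rfl

theorem isNRational_indicator_of_finite {S : Set (σ →₀ ℕ)} (hS : S.Finite) :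
    IsNRational (indicator S) := by
  classical
  refine isNRational_of_finite_support _ (hS.subset fun d hd ↦ ?_)
  by_contra h
  simp [coeff_indicator, h] at hd

theorem isNRational_of_eq_add_monomial_mul {A F : MvPowerSeries σ ℕ} {x : σ →₀ ℕ}
    (hA : IsNRational A) (hx : x ≠ 0) (hF : F = A + monomial x 1 * F) : IsNRational F := by
  classical
  set R := Set.range fun c : ℕ ↦ c • x
  have hbase : {e ∈ R | ¬ x ≤ e} = {0} := by
    ext e
    simp only [R, Set.mem_ofPred_eq, Set.mem_range, Set.mem_singleton_iff]
    constructor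
    · rintro ⟨⟨_ | c, rfl⟩, hle⟩
      · exact zero_smul ℕ x
      · exact absurd (succ_nsmul x c ▸ le_add_self) hle
    · rintro rfl
      exact ⟨⟨0, zero_smul ℕ x⟩, fun h ↦ hx (nonpos_iff_eq_zero.1 h)⟩
  have hshift : {e | e + x ∈ R} = R := by
    ext e
    simp only [R, Set.mem_ofPred_eq, Set.mem_range]
    constructor
    · rintro ⟨_ | c, hc⟩
      · exact absurd (add_eq_zero.1 (hc.symm.trans (zero_smul ℕ x))).2 hx
      · exact ⟨c, add_right_cancel (hc.symm.trans (succ_nsmul x c)).symm⟩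
    · rintro ⟨c, rfl⟩
      exact ⟨c + 1, succ_nsmul x c⟩
  have hR : indicator R = 1 + monomial x 1 * indicator R := by
    conv_lhs => rw [indicator_eq_add_monomial_mul R x, hbase, hshift, indicator_singleton_zero]
  have hx0 : constantCoeff (monomial x (1 : ℕ)) = 0 := by
    rw [← coeff_zero_eq_constantCoeff_apply, coeff_monomial, if_neg (Ne.symm hx)]
  have hAR : F = A * indicator R := eq_of_eq_add_mul hx0 hF (by
    conv_lhs => rw [hR]
    ring)
  rw [hAR]
  exact hA.mul (.quasiInv (isNRational_monomial x 1) hx0 hR)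

theorem isNRational_indicator_lowerSet [Finite σ] (S : LowerSet (σ →₀ ℕ)) :
    IsNRational (indicator (S : Set (σ →₀ ℕ))) := by
  induction S using WellFoundedLT.induction with
  | _ S ih =>
  by_cases hS : (S : Set (σ →₀ ℕ)) ⊆ {0}
  · exact isNRational_indicator_of_finite ((Set.finite_singleton 0).subset hS)
  obtain ⟨x, hxS, hx⟩ := Set.not_subset.1 hS
  let S₀ : LowerSet (σ →₀ ℕ) :=
    ⟨{e ∈ S | ¬ x ≤ e}, fun a b hba ha ↦ ⟨S.lower hba ha.1, fun hxb ↦ ha.2 (hxb.trans hba)⟩⟩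
  let S' : LowerSet (σ →₀ ℕ) := ⟨{e | e + x ∈ S}, fun a b hba ha ↦ S.lower (by gcongr) ha⟩
  have hS₀ : S₀ < S := lt_of_le_of_ne (fun e he ↦ he.1) fun h ↦ (h ▸ hxS).2 le_rfl
  have hS' : S' ≤ S := fun e he ↦ S.lower le_self_add he
  have hsplit : indicator (S : Set (σ →₀ ℕ)) = indicator S₀ + monomial x 1 * indicator S' :=
    indicator_eq_add_monomial_mul S x
  rcases hS'.lt_or_eq with hlt | heq
  · rw [hsplit]
    exact (ih S₀ hS₀).add ((isNRational_monomial x 1).mul (ih S' hlt))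
  · rw [heq] at hsplit
    exact isNRational_of_eq_add_monomial_mul (ih S₀ hS₀) hx hsplit

section Pushforward

variable (φ : (σ →₀ ℕ) →+ (τ →₀ ℕ))

/-- The substitution `x^e ↦ y^(φ e)`. The `finsum` is junk (zero) on infinite fibres, which the
hypothesis `hφ` of the lemmas below rules out. -/
noncomputable def pushforward (f : MvPowerSeries σ ℕ) : MvPowerSeries τ ℕ :=
  fun d ↦ ∑ᶠ e ∈ {e | φ e = d}, coeff e f

variable {φ} [Finite σ]

theorem finite_fiber_of_degree_le (hφ : ∀ e, e.degree ≤ (φ e).degree) (d : τ →₀ ℕ) :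
    {e | φ e = d}.Finite :=
  (Finsupp.finite_of_degree_le d.degree).subset fun e he ↦ he ▸ hφ e

theorem coeff_pushforward (hφ : ∀ e, e.degree ≤ (φ e).degree) (f : MvPowerSeries σ ℕ)
    (d : τ →₀ ℕ) :
    coeff d (pushforward φ f) = ∑ e ∈ (finite_fiber_of_degree_le hφ d).toFinset, coeff e f :=
  finsum_mem_eq_finite_toFinset_sum _ _

theorem constantCoeff_pushforward (hφ : ∀ e, e.degree ≤ (φ e).degree)
    (f : MvPowerSeries σ ℕ) : constantCoeff (pushforward φ f) = constantCoeff f := by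
  have hfib : (finite_fiber_of_degree_le hφ 0).toFinset = {0} := by
    ext e
    rw [Set.Finite.mem_toFinset, Set.mem_ofPred_eq, Finset.mem_singleton]
    refine ⟨fun he ↦ ?_, fun he ↦ he ▸ map_zero φ⟩
    exact (Finsupp.degree_eq_zero_iff e).1 (Nat.le_zero.1 (by simpa [he] using hφ e))
  rw [← coeff_zero_eq_constantCoeff_apply, coeff_pushforward hφ, hfib, Finset.sum_singleton,
    coeff_zero_eq_constantCoeff_apply]

theorem pushforward_one (hφ : ∀ e, e.degree ≤ (φ e).degree) :
    pushforward φ (1 : MvPowerSeries σ ℕ) = 1 := by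
  classical
  ext d
  rcases eq_or_ne d 0 with rfl | hd
  · simp only [coeff_zero_eq_constantCoeff_apply, constantCoeff_pushforward hφ, map_one]
  rw [coeff_pushforward hφ, coeff_one, if_neg hd]
  refine Finset.sum_eq_zero fun e he ↦ ?_
  rw [Set.Finite.mem_toFinset] at he
  rw [coeff_one, if_neg]
  rintro rfl
  exact hd (he.out ▸ map_zero φ)

theorem pushforward_add (hφ : ∀ e, e.degree ≤ (φ e).degree) (f g : MvPowerSeries σ ℕ) :
    pushforward φ (f + g) = pushforward φ f + pushforward φ g := by
  ext d
  simp only [map_add, coeff_pushforward hφ, Finset.sum_add_distrib]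

theorem pushforward_mul (hφ : ∀ e, e.degree ≤ (φ e).degree) (f g : MvPowerSeries σ ℕ) :
    pushforward φ (f * g) = pushforward φ f * pushforward φ g := by
  classical
  ext d
  -- both sides sum `f_a g_b` over the pairs with `φ (a + b) = d`, grouped by `a + b`, resp. by
  -- `(φ a, φ b)`
  simp only [coeff_pushforward hφ, coeff_mul, Finset.sum_mul_sum, ← Finset.sum_product',
    Finset.sum_sigma']
  refine Finset.sum_nbij' (fun x ↦ ⟨(φ x.2.1, φ x.2.2), x.2⟩) (fun y ↦ ⟨y.2.1 + y.2.2, y.2⟩)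
    ?_ ?_ ?_ ?_ fun _ _ ↦ rfl
  · rintro ⟨e, p⟩ h
    simp only [Finset.mem_sigma, Set.Finite.mem_toFinset, Set.mem_ofPred_eq,
      Finset.HasAntidiagonal.mem_antidiagonal, Finset.mem_product, and_self, and_true] at h ⊢
    rw [← map_add, h.2, h.1]
  · rintro ⟨q, p⟩ h
    simp only [Finset.mem_sigma, Finset.HasAntidiagonal.mem_antidiagonal, Finset.mem_product,
      Set.Finite.mem_toFinset, Set.mem_ofPred_eq, map_add, and_true] at h ⊢
    rw [← h.1, h.2.1, h.2.2]
  · rintro ⟨e, p⟩ h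
    obtain ⟨-, rfl⟩ := by simpa using h
    rfl
  · rintro ⟨⟨q₁, q₂⟩, p⟩ h
    obtain ⟨-, rfl, rfl⟩ := by simpa using h
    rfl

theorem isNRational_pushforward (hφ : ∀ e, e.degree ≤ (φ e).degree) {f : MvPowerSeries σ ℕ}
    (hf : IsNRational f) : IsNRational (pushforward φ f) := by
  induction hf with
  | poly P =>
    refine isNRational_of_finite_support _
      ((P.support.finite_toSet.image φ).subset fun d hd ↦ ?_)
    rw [Set.mem_ofPred_eq, coeff_pushforward hφ] at hd
    obtain ⟨e, he, hne⟩ := Finset.exists_ne_zero_of_sum_ne_zero hd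
    rw [MvPolynomial.coeff_coe] at hne
    rw [Set.Finite.mem_toFinset] at he
    exact ⟨e, MvPolynomial.mem_support_iff.2 hne, he⟩
  | add _ _ ihf ihg => exact pushforward_add hφ _ _ ▸ ihf.add ihg
  | mul _ _ ihf ihg => exact pushforward_mul hφ _ _ ▸ ihf.mul ihg
  | quasiInv _ hh hg ih =>
    refine .quasiInv ih (constantCoeff_pushforward hφ _ ▸ hh) ?_
    conv_lhs => rw [hg, pushforward_add hφ, pushforward_one hφ, pushforward_mul hφ]

end Pushforward

section LexMin

variable [LinearOrder σ] (φ : (σ →₀ ℕ) →+ (τ →₀ ℕ))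

def lexMinFibers : LowerSet (σ →₀ ℕ) where
  carrier := {e | ∀ e', φ e' = φ e → toLex e ≤ toLex e'}
  lower' e d hde he d' hd' := by
    have hφ : φ (d' + (e - d)) = φ e := by rw [map_add, hd', ← map_add, add_tsub_cancel_of_le hde]
    by_contra! hlt
    have := add_lt_add_of_lt_of_le hlt (le_refl (toLex (e - d)))
    rw [← toLex_add, ← toLex_add, add_tsub_cancel_of_le hde] at this
    exact (he _ hφ).not_gt this

theorem pushforward_indicator_lexMinFibers [Finite σ] (hφ : ∀ e, e.degree ≤ (φ e).degree) :
    pushforward φ (indicator (lexMinFibers φ : Set (σ →₀ ℕ))) = indicator (Set.range φ) := by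
  classical
  ext d
  rw [coeff_pushforward hφ, coeff_indicator]
  split_ifs with hd
  · obtain ⟨e₀, he₀, hmin⟩ := Finset.exists_min_image
      (finite_fiber_of_degree_le hφ d).toFinset toLex
      (let ⟨e, he⟩ := hd; ⟨e, (Set.Finite.mem_toFinset _).2 he⟩)
    have hfib : ∀ {e}, e ∈ (finite_fiber_of_degree_le hφ d).toFinset ↔ φ e = d :=
      Set.Finite.mem_toFinset _
    have he₀S : e₀ ∈ (lexMinFibers φ : Set (σ →₀ ℕ)) :=
      fun e he ↦ hmin e (hfib.2 (he.trans (hfib.1 he₀)))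
    rw [Finset.sum_eq_single_of_mem e₀ he₀ fun e he hne ↦ ?_, coeff_indicator, if_pos he₀S]
    rw [coeff_indicator, if_neg]
    exact fun heS ↦ hne (toLex.injective
      (le_antisymm (heS e₀ ((hfib.1 he₀).trans (hfib.1 he).symm)) (hmin e he)))
  · refine Finset.sum_eq_zero fun e he ↦ ?_
    rw [Set.Finite.mem_toFinset] at he
    exact absurd ⟨e, he⟩ hd

end LexMin

theorem isNRational_indicator_range [Finite σ] (φ : (σ →₀ ℕ) →+ (τ →₀ ℕ))
    (hφ : ∀ e, e.degree ≤ (φ e).degree) : IsNRational (indicator (Set.range φ)) := by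
  let : LinearOrder σ := LinearOrder.lift' _ (Finite.equivFin σ).injective
  exact pushforward_indicator_lexMinFibers φ hφ ▸
    isNRational_pushforward hφ (isNRational_indicator_lowerSet _)

theorem isNRational_indicator_of_fg [Finite σ] {M : AddSubmonoid (σ →₀ ℕ)}
    (hM : M.FG) : IsNRational (indicator (M : Set (σ →₀ ℕ))) := by
  obtain ⟨s, rfl⟩ := hM
  let g : ((s : Set (σ →₀ ℕ)) \ {0} : Set (σ →₀ ℕ)) → σ →₀ ℕ := Subtype.val
  have hrange :
      Set.range (Finsupp.linearCombination ℕ g) = AddSubmonoid.closure (s : Set (σ →₀ ℕ)) := by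
    rw [← LinearMap.coe_range, Finsupp.range_linearCombination, ← Submodule.coe_toAddSubmonoid,
      Submodule.span_nat_eq_addSubmonoidClosure, Subtype.range_coe,
      ← AddSubmonoid.closure_insert_zero, Set.insert_sdiff_singleton,
      AddSubmonoid.closure_insert_zero]
  rw [← hrange]
  exact isNRational_indicator_range (Finsupp.linearCombination ℕ g).toAddMonoidHom
    (Finsupp.degree_le_degree_linearCombination fun j ↦ (Set.mem_sdiff_singleton.1 j.2).2)

end MvPowerSeries

/-- Let `v_1, …, v_k ∈ ℤ^n` and let `𝒵 = {z ∈ ℕ^k : z_1 v_1 + ⋯ + z_k v_k = 0}`. Then the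
generating function `Σ_{z ∈ 𝒵} y^z` is ℕ-rational. -/
theorem kernel_genFun_isNRational (n k : ℕ) (v : Fin k → Fin n → ℤ) :
    MvPowerSeries.IsNRational
      ((fun d : Fin k →₀ ℕ => if ∑ i : Fin k, (d i : ℤ) • v i = 0 then 1 else 0) :
        MvPowerSeries (Fin k) ℕ) := by
  classical
  let L : (Fin k →₀ ℕ) →+ (Fin n → ℤ) := (Finsupp.linearCombination ℕ v).toAddMonoidHom
  have hL (d : Fin k →₀ ℕ) : L d = ∑ i, (d i : ℤ) • v i := by
    simp only [L, LinearMap.toAddMonoidHom_coe, Finsupp.linearCombination_apply,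
      Finsupp.sum_fintype, natCast_zsmul, zero_smul, implies_true]
  have hker : MvPowerSeries.indicator (L.eqLocusM 0 : Set (Fin k →₀ ℕ)) =
      ((fun d ↦ if ∑ i, (d i : ℤ) • v i = 0 then 1 else 0) : MvPowerSeries (Fin k) ℕ) := by
    funext d
    simp only [MvPowerSeries.indicator, SetLike.mem_coe, AddMonoidHom.mem_eqLocusM, hL,
      AddMonoidHom.zero_apply]
  exact hker ▸ MvPowerSeries.isNRational_indicator_of_fg (AddSubmonoid.fg_eqLocusM L 0)
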